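/- Let K ≥ 1 be a real number. Then ∫₀¹ 1/Δ(r) dr = (1/2) √((K+1)/K) · log( (√(K+1) + √K) / (√(K+1) − √K) ). Consequently, the schedule g₁(r) = [2√(K/(K+1)) / log((√(K+1)+√K)/(√(K+1)−√K))] · Δ(r)^{-1} satisfies ∫₀¹ g₁(r) dr = 1. -/

import Mathlib

/-- The spectral gap `Δ(r) = √(1 - 4 K r (1-r)/(K+1))` of the restricted Grover Hamiltonian. -/
noncomputable def groverGap (K r : ℝ) : ℝ :=
  Real.sqrt (1 - 4 * K * r * (1 - r) / (K + 1))

/-- The schedule `g₁(r) ∝ Δ(r)⁻¹`, normalized so that `∫₀¹ g₁ = 1`. -/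
noncomputable def groverSchedule1 (K : ℝ) : ℝ → ℝ :=
  fun r => (2 * Real.sqrt (K / (K + 1)) /
      Real.log ((Real.sqrt (K + 1) + Real.sqrt K) / (Real.sqrt (K + 1) - Real.sqrt K)))
    * (groverGap K r)⁻¹

/-!
Completing the square, `Δ(r) = √(1 + K (2r - 1)²) / √(K + 1)`, so `Δ⁻¹` has the antiderivative
`√(K + 1) / (2√K) · arsinh (√K (2r - 1))` and `∫₀¹ Δ⁻¹ = √((K + 1)/K) · arsinh √K`. Finally
`arsinh √K = log (√K + √(K + 1))`, which is half the logarithm in the statement because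
`(√(K + 1) + √K)(√(K + 1) - √K) = 1`.
-/

open Real

theorem integral_inv_sqrt_one_add_sq (a b : ℝ) :
    ∫ x in a..b, (√(1 + x ^ 2))⁻¹ = arsinh b - arsinh a := by
  have hcont : Continuous fun x : ℝ => (√(1 + x ^ 2))⁻¹ :=
    (by fun_prop : Continuous fun x : ℝ => √(1 + x ^ 2)).inv₀
      fun x => (sqrt_pos.2 (by positivity)).ne'
  exact intervalIntegral.integral_eq_sub_of_hasDerivAt (fun x _ => hasDerivAt_arsinh x)
    (hcont.intervalIntegrable a b)

theorem integral_inv_sqrt_one_add_sq_mul_sub {c : ℝ} (hc : c ≠ 0) (d a b : ℝ) :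
    ∫ x in a..b, (√(1 + (c * x - d) ^ 2))⁻¹ = (arsinh (c * b - d) - arsinh (c * a - d)) / c := by
  rw [intervalIntegral.integral_comp_mul_sub (fun x => (√(1 + x ^ 2))⁻¹) hc,
    integral_inv_sqrt_one_add_sq, smul_eq_mul, inv_mul_eq_div]

theorem arsinh_sqrt {K : ℝ} (hK : 0 ≤ K) : arsinh √K = log (√K + √(K + 1)) := by
  rw [arsinh, sq_sqrt hK, add_comm 1 K]

theorem log_add_div_sub_of_sq_sub_sq_eq_one {a c : ℝ} (h : a ^ 2 - c ^ 2 = 1) :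
    log ((a + c) / (a - c)) = 2 * log (a + c) := by
  have hsub : a - c = (a + c)⁻¹ := eq_inv_of_mul_eq_one_left (by linear_combination h)
  rw [hsub, div_inv_eq_mul, ← sq, log_pow, Nat.cast_ofNat]

theorem groverGap_eq {K : ℝ} (hK : 0 ≤ K) (r : ℝ) :
    groverGap K r = √(1 + (2 * √K * r - √K) ^ 2) / √(K + 1) := by
  have hK1 : K + 1 ≠ 0 := by positivity
  rw [groverGap, ← sqrt_div' _ (by positivity : (0 : ℝ) ≤ K + 1)]
  congr 1
  field_simp
  linear_combination -(1 - 2 * r) ^ 2 * sq_sqrt hK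

theorem integral_inv_groverGap {K : ℝ} (hK : 0 < K) :
    ∫ r in (0 : ℝ)..1, (groverGap K r)⁻¹ = √((K + 1) / K) * log (√K + √(K + 1)) := by
  have hc : 2 * √K ≠ 0 := by positivity
  simp only [groverGap_eq hK.le, inv_div, div_eq_mul_inv (√(K + 1))]
  rw [intervalIntegral.integral_const_mul, integral_inv_sqrt_one_add_sq_mul_sub hc,
    show 2 * √K * 1 - √K = √K by ring, show 2 * √K * 0 - √K = -√K by ring, arsinh_neg,
    ← arsinh_sqrt hK.le,
    sqrt_div' _ hK.le]
  field_simp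
  ring

/-- `∫₀¹ Δ(r)⁻¹ dr = (1/2)√((K+1)/K) log[(√(K+1)+√K)/(√(K+1)-√K)]`, and
consequently `∫₀¹ g₁(r) dr = 1`. -/
theorem grover_schedule1_normalized (K : ℝ) (hK : 1 ≤ K) :
    (∫ r in (0 : ℝ)..1, (groverGap K r)⁻¹)
        = (1 / 2) * Real.sqrt ((K + 1) / K) *
          Real.log ((Real.sqrt (K + 1) + Real.sqrt K) / (Real.sqrt (K + 1) - Real.sqrt K))
    ∧ (∫ r in (0 : ℝ)..1, groverSchedule1 K r) = 1 := by
  have hK0 : 0 < K := by linarith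
  have hlog : log ((√(K + 1) + √K) / (√(K + 1) - √K)) = 2 * log (√(K + 1) + √K) :=
    log_add_div_sub_of_sq_sub_sq_eq_one (by rw [sq_sqrt hK0.le, sq_sqrt (by linarith)]; ring)
  have hint : ∫ r in (0 : ℝ)..1, (groverGap K r)⁻¹
      = 1 / 2 * √((K + 1) / K) * log ((√(K + 1) + √K) / (√(K + 1) - √K)) := by
    rw [integral_inv_groverGap hK0, hlog, add_comm √K]
    ring
  have hlog_pos : 0 < log (√(K + 1) + √K) :=
    log_pos (by linarith [lt_sqrt_of_sq_lt (by linarith : (1 : ℝ) ^ 2 < K + 1), sqrt_nonneg K])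
  refine ⟨hint, ?_⟩
  simp only [groverSchedule1]
  rw [intervalIntegral.integral_const_mul, hint, hlog, sqrt_div' _ hK0.le,
    sqrt_div' K (by positivity)]
  field_simp
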